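/- The polynomial x + 1 is an eigenvalue of the 14×14 states matrix M over the field of fractions ℚ(x); more precisely, det(M − (x+1)·I₁₄) = 0. -/
import Mathlib

/-- The 14×14 states matrix over the rational function field `ℚ(x)`, with `s = x+1`,
`t = x+2`, `u = x²+3x+2`, `v = x²+3x+3`. -/
noncomputable def M14 : Matrix (Fin 14) (Fin 14) (RatFunc ℚ) :=
  let x : RatFunc ℚ := RatFunc.X
  let s := x + 1
  let t := x + 2
  let u := x ^ 2 + 3 * x + 2
  let v := x ^ 2 + 3 * x + 3
  !![1, 0, 0, 0, 0, 0, 0, 0, 0, 0, 0, 0, 0, 0;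
     1, t, 0, 0, 0, s, 0, 0, 0, 0, 0, 0, 0, 1;
     1, 0, s, 0, 1, 0, 0, 1, 0, 0, 0, 0, 0, 0;
     1, 0, 0, t, 0, 0, s, 0, 0, 0, 0, 0, 1, 0;
     1, 0, s, 0, t, 0, 0, 1, 0, 0, 0, 0, 0, 0;
     0, 1, 0, 0, 0, s, 0, 0, 0, 0, 0, 0, 0, 1;
     0, 0, 0, 1, 0, 0, s, 0, 0, 0, 0, 0, 1, 0;
     1, 0, s, 0, 1, 0, 0, t, 0, 0, 0, 0, 0, 0;
     1, 0, s, 0, t, 0, 0, t, v, u, 0, 0, 0, 0;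
     0, 0, 0, 0, 0, 0, 0, 0, 1, s, 0, 0, 0, 0;
     1, t, 0, t, 0, s, s, 0, 0, 0, v, u, t, t;
     0, 0, 0, 0, 0, 0, 0, 0, 0, 0, 1, s, 0, 0;
     0, 0, 0, 1, 0, 0, s, 0, 0, 0, 0, 0, t, 0;
     0, 1, 0, 0, 0, s, 0, 0, 0, 0, 0, 0, 0, t]

lemma vec14_at0 {α : Type*} (a0 a1 a2 a3 a4 a5 a6 a7 a8 a9 a10 a11 a12 a13 : α) : ![a0,a1,a2,a3,a4,a5,a6,a7,a8,a9,a10,a11,a12,a13] (0 : Fin 14) = a0 := rfl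
lemma vec14_at1 {α : Type*} (a0 a1 a2 a3 a4 a5 a6 a7 a8 a9 a10 a11 a12 a13 : α) : ![a0,a1,a2,a3,a4,a5,a6,a7,a8,a9,a10,a11,a12,a13] (1 : Fin 14) = a1 := rfl
lemma vec14_at2 {α : Type*} (a0 a1 a2 a3 a4 a5 a6 a7 a8 a9 a10 a11 a12 a13 : α) : ![a0,a1,a2,a3,a4,a5,a6,a7,a8,a9,a10,a11,a12,a13] (2 : Fin 14) = a2 := rfl
lemma vec14_at3 {α : Type*} (a0 a1 a2 a3 a4 a5 a6 a7 a8 a9 a10 a11 a12 a13 : α) : ![a0,a1,a2,a3,a4,a5,a6,a7,a8,a9,a10,a11,a12,a13] (3 : Fin 14) = a3 := rfl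
lemma vec14_at4 {α : Type*} (a0 a1 a2 a3 a4 a5 a6 a7 a8 a9 a10 a11 a12 a13 : α) : ![a0,a1,a2,a3,a4,a5,a6,a7,a8,a9,a10,a11,a12,a13] (4 : Fin 14) = a4 := rfl
lemma vec14_at5 {α : Type*} (a0 a1 a2 a3 a4 a5 a6 a7 a8 a9 a10 a11 a12 a13 : α) : ![a0,a1,a2,a3,a4,a5,a6,a7,a8,a9,a10,a11,a12,a13] (5 : Fin 14) = a5 := rfl
lemma vec14_at6 {α : Type*} (a0 a1 a2 a3 a4 a5 a6 a7 a8 a9 a10 a11 a12 a13 : α) : ![a0,a1,a2,a3,a4,a5,a6,a7,a8,a9,a10,a11,a12,a13] (6 : Fin 14) = a6 := rfl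
lemma vec14_at7 {α : Type*} (a0 a1 a2 a3 a4 a5 a6 a7 a8 a9 a10 a11 a12 a13 : α) : ![a0,a1,a2,a3,a4,a5,a6,a7,a8,a9,a10,a11,a12,a13] (7 : Fin 14) = a7 := rfl
lemma vec14_at8 {α : Type*} (a0 a1 a2 a3 a4 a5 a6 a7 a8 a9 a10 a11 a12 a13 : α) : ![a0,a1,a2,a3,a4,a5,a6,a7,a8,a9,a10,a11,a12,a13] (8 : Fin 14) = a8 := rfl
lemma vec14_at9 {α : Type*} (a0 a1 a2 a3 a4 a5 a6 a7 a8 a9 a10 a11 a12 a13 : α) : ![a0,a1,a2,a3,a4,a5,a6,a7,a8,a9,a10,a11,a12,a13] (9 : Fin 14) = a9 := rfl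
lemma vec14_at10 {α : Type*} (a0 a1 a2 a3 a4 a5 a6 a7 a8 a9 a10 a11 a12 a13 : α) : ![a0,a1,a2,a3,a4,a5,a6,a7,a8,a9,a10,a11,a12,a13] (10 : Fin 14) = a10 := rfl
lemma vec14_at11 {α : Type*} (a0 a1 a2 a3 a4 a5 a6 a7 a8 a9 a10 a11 a12 a13 : α) : ![a0,a1,a2,a3,a4,a5,a6,a7,a8,a9,a10,a11,a12,a13] (11 : Fin 14) = a11 := rfl
lemma vec14_at12 {α : Type*} (a0 a1 a2 a3 a4 a5 a6 a7 a8 a9 a10 a11 a12 a13 : α) : ![a0,a1,a2,a3,a4,a5,a6,a7,a8,a9,a10,a11,a12,a13] (12 : Fin 14) = a12 := rfl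
lemma vec14_at13 {α : Type*} (a0 a1 a2 a3 a4 a5 a6 a7 a8 a9 a10 a11 a12 a13 : α) : ![a0,a1,a2,a3,a4,a5,a6,a7,a8,a9,a10,a11,a12,a13] (13 : Fin 14) = a13 := rfl

set_option maxHeartbeats 1600000 in
theorem celtic_eigenvalue_x_add_one :
    (M14 - Matrix.scalar (Fin 14) ((RatFunc.X : RatFunc ℚ) + 1)).det = 0 := by
  rw [← Matrix.exists_vecMul_eq_zero_iff]
  refine ⟨![1, RatFunc.X, 0, 0, 0, 0, 0, 0, 0, 0, 0, 0, 0, -RatFunc.X], ?_, ?_⟩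
  · intro h
    have := congrFun h 0
    simp at this
  · funext j
    fin_cases j <;>
      simp (config := { decide := true }) [M14, Matrix.vecMul, dotProduct,
        Fin.sum_univ_succ, Matrix.sub_apply, Matrix.scalar_apply, Matrix.diagonal_apply,
        vec14_at0, vec14_at1, vec14_at2, vec14_at3, vec14_at4, vec14_at5, vec14_at6,
        vec14_at7, vec14_at8, vec14_at9, vec14_at10, vec14_at11, vec14_at12, vec14_at13] <;>
      ring
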